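/- Let λ be a regular infinite cardinal with 2^λ = λ⁺ and let D be any set. Let Q̄ be the set of all λ-sequences ⟨p_ξ : ξ < λ⟩ where each p_ξ is a partial 0-1 function on D with domain of cardinality less than λ; call two such sequences compatible if they are coordinatewise compatible. Then every subset of Q̄ whose members are pairwise incompatible has cardinality at most λ⁺. (That is, the full-support λ-fold product of the poset of partial 0-1 functions on D with domains of size < λ has the λ⁺⁺-chain condition.) -/

import Mathlib

/-!
View a `λ`-sequence of partial functions on `D` as a single partial function on `ι × D`, whose
domain has size at most `λ`. Since `(λ⁺) ^ λ = 2 ^ λ = λ⁺`, a chain of length `λ⁺` produces a set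
`P` of size `λ⁺` such that, whenever a `λ`-small set `S` is covered by the domains of fewer than
`λ⁺` members of `P ∩ A`, every pattern that members of `A` take on `S` is taken by a member of
`P ∩ A`; regularity of `λ⁺` is what lets the chain absorb such small subfamilies. For `g ∈ A`
take `S = dom g ∩ ⋃ {dom p | p ∈ P ∩ A}` and `h ∈ P ∩ A` agreeing with `g` on `S`. Then `g` and
`h` agree on `dom g ∩ dom h`, so they are compatible, hence equal, and `A ⊆ P`.
-/

open Cardinal

universe u

/-- Two partial 0-1 functions on `D` (represented as `D → Option Bool`, with
domain `{x | p x ≠ none}`) are compatible if they agree on the intersection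
of their domains. -/
def Compat {D : Type u} (p q : D → Option Bool) : Prop :=
  ∀ x a b, p x = some a → q x = some b → a = b

open Set Order

theorem Cardinal.mk_iUnion_le_of_le {ι α : Type u} {κ : Cardinal.{u}} (hκ : ℵ₀ ≤ κ)
    (hι : #ι ≤ κ) {A : ι → Set α} (hA : ∀ i, #(A i) ≤ κ) : #(⋃ i, A i) ≤ κ :=
  (mk_iUnion_le A).trans <| (mul_le_mul' hι (ciSup_le' hA)).trans (mul_eq_self hκ).le

theorem Cardinal.mk_biUnion_le_of_forall_le {ι α : Type u} {κ : Cardinal.{u}} (hκ : ℵ₀ ≤ κ)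
    {s : Set ι} (hs : #s ≤ κ) {A : ι → Set α} (hA : ∀ i ∈ s, #(A i) ≤ κ) :
    #(⋃ i ∈ s, A i) ≤ κ := by
  rw [biUnion_eq_iUnion]
  exact mk_iUnion_le_of_le hκ hs fun i => hA i i.2

section Closure

variable {I X : Type u} [LinearOrder I] [WellFoundedLT I]

noncomputable def closureStage (F : Set X → Set X) : I → Set X :=
  WellFoundedLT.fix fun i stage => F (⋃ (j) (hj : j ∈ Iio i), stage j hj)

theorem closureStage_eq (F : Set X → Set X) (i : I) :
    closureStage F i = F (⋃ j ∈ Iio i, closureStage F j) :=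
  WellFoundedLT.fix_eq _ i

theorem mk_closureStage_le {F : Set X → Set X} (hI : ℵ₀ ≤ #I)
    (hF : ∀ T : Set X, #T ≤ #I → #(F T) ≤ #I) (i : I) : #(closureStage F i) ≤ #I := by
  induction i using WellFoundedLT.induction with
  | ind i ih =>
    rw [closureStage_eq]
    exact hF _ (mk_biUnion_le_of_forall_le hI (mk_set_le _) ih)

theorem exists_closed_of_isRegularCardinalOrder [IsRegularCardinalOrder I] (hI : ℵ₀ ≤ #I)
    {F : Set X → Set X} (hmono : Monotone F) (hF : ∀ T : Set X, #T ≤ #I → #(F T) ≤ #I) :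
    ∃ P : Set X, #P ≤ #I ∧ ∀ T ⊆ P, #T < #I → F T ⊆ P := by
  refine ⟨⋃ i, closureStage F i, mk_iUnion_le_of_le hI le_rfl (mk_closureStage_le hI hF),
    fun T hT hTcard => ?_⟩
  choose stageOf hstageOf using fun t : T => mem_iUnion.1 (hT t.2)
  obtain ⟨γ, hγ⟩ : ∃ γ, ∀ i ∈ range stageOf, i < γ := by
    rw [← not_isCofinal_iff]
    intro hcofinal
    have := (cof_le hcofinal).trans mk_range_le
    rw [cof_eq_cardinalMk] at this
    exact this.not_gt hTcard
  have hTγ : T ⊆ ⋃ j ∈ Iio γ, closureStage F j := fun t ht =>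
    mem_biUnion (hγ _ ⟨⟨t, ht⟩, rfl⟩) (hstageOf ⟨t, ht⟩)
  calc F T ⊆ closureStage F γ := (closureStage_eq F γ).symm ▸ hmono hTγ
    _ ⊆ ⋃ i, closureStage F i := subset_iUnion _ γ

end Closure

theorem Cardinal.IsRegular.exists_closed {X : Type u} {κ : Cardinal.{u}} (hκ : κ.IsRegular)
    {F : Set X → Set X} (hmono : Monotone F) (hF : ∀ T : Set X, #T ≤ κ → #(F T) ≤ κ) :
    ∃ P : Set X, #P ≤ κ ∧ ∀ T ⊆ P, #T < κ → F T ⊆ P := by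
  have hcard : #κ.ord.ToType = κ := by rw [mk_toType, card_ord]
  have : IsRegularCardinalOrder κ.ord.ToType :=
    ⟨by rw [Ordinal.type_toType, Ordinal.cof_toType, hκ.cof_ord]⟩
  simpa only [hcard] using exists_closed_of_isRegularCardinalOrder (I := κ.ord.ToType)
    (hcard.symm ▸ hκ.aleph0_le) hmono (by simpa only [hcard] using hF)

namespace PartialBoolFun

variable {X : Type u}

def dom (p : X → Option Bool) : Set X := {x | p x ≠ none}

theorem compat_of_eqOn {p q : X → Option Bool} (h : EqOn p q (dom p ∩ dom q)) : Compat p q := by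
  intro x a b hp hq
  have hx : x ∈ dom p ∩ dom q := ⟨by simp [dom, hp], by simp [dom, hq]⟩
  simpa [hp, hq] using h hx

theorem mk_dom_uncurry_le {ι D : Type u} {lam : Cardinal.{u}} (hlam : ℵ₀ ≤ lam) (hι : #ι ≤ lam)
    {f : ι → D → Option Bool} (hf : ∀ ξ, #(dom (f ξ)) ≤ lam) :
    #(dom (Function.uncurry f)) ≤ lam := by
  have hcover : dom (Function.uncurry f) ⊆ ⋃ ξ, Prod.mk ξ '' dom (f ξ) := fun z hz =>
    mem_iUnion.2 ⟨z.1, z.2, hz, rfl⟩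
  exact (mk_le_mk_of_subset hcover).trans <|
    mk_iUnion_le_of_le hlam hι fun ξ => mk_image_le.trans (hf ξ)

variable (A : Set (X → Option Bool))

/-- One member of `A` for each pattern that members of `A` take on `S`. -/
noncomputable def patternReps (S : Set X) : Set (X → Option Bool) :=
  (exists_subset_bijOn A S.domRestrict).choose

theorem patternReps_subset (S : Set X) : patternReps A S ⊆ A :=
  (exists_subset_bijOn A S.domRestrict).choose_spec.1

theorem exists_mem_patternReps {p : X → Option Bool} (hp : p ∈ A) (S : Set X) :
    ∃ q ∈ patternReps A S, EqOn q p S := by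
  obtain ⟨q, hq, hqp⟩ := (exists_subset_bijOn A S.domRestrict).choose_spec.2.surjOn
    (mem_image_of_mem _ hp)
  exact ⟨q, hq, domRestrict_eq_domRestrict_iff.1 hqp⟩

theorem mk_patternReps_le (S : Set X) : #(patternReps A S) ≤ 3 ^ #S := by
  have hinj : InjOn S.domRestrict (patternReps A S) :=
    (exists_subset_bijOn A S.domRestrict).choose_spec.2.injOn
  rw [← mk_image_eq_of_injOn _ _ hinj]
  calc _ ≤ #(S → Option Bool) := mk_set_le _
    _ = 3 ^ #S := by rw [mk_arrow, mk_option, mk_bool, lift_uzero]; norm_num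

noncomputable def smallPatternReps (lam : Cardinal.{u}) (T : Set (X → Option Bool)) :
    Set (X → Option Bool) :=
  ⋃ S ∈ {S | S ⊆ ⋃ p ∈ T ∩ A, dom p ∧ #S ≤ lam}, patternReps A S

theorem smallPatternReps_mono (lam : Cardinal.{u}) : Monotone (smallPatternReps A lam) :=
  fun _ _ hT => biUnion_subset_biUnion_left fun _ hS =>
    ⟨hS.1.trans (biUnion_subset_biUnion_left (inter_subset_inter_left _ hT)), hS.2⟩

variable {A} {lam : Cardinal.{u}}

theorem mk_smallPatternReps_le (hlam : ℵ₀ ≤ lam) (hch : (2 : Cardinal.{u}) ^ lam = succ lam)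
    (hdom : ∀ p ∈ A, #(dom p) ≤ lam) {T : Set (X → Option Bool)} (hT : #T ≤ succ lam) :
    #(smallPatternReps A lam T) ≤ succ lam := by
  have hsucc : ℵ₀ ≤ succ lam := hlam.trans (le_succ lam)
  have hU : #(⋃ p ∈ T ∩ A, dom p) ≤ succ lam :=
    mk_biUnion_le_of_forall_le hsucc ((mk_le_mk_of_subset inter_subset_left).trans hT)
      fun p hp => (hdom p hp.2).trans (le_succ lam)
  refine mk_biUnion_le_of_forall_le hsucc ?_ fun S hS => ?_
  · calc _ ≤ max #(⋃ p ∈ T ∩ A, dom p) ℵ₀ ^ lam := mk_bounded_subset_le _ lam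
      _ ≤ succ lam ^ lam := power_le_power_right (max_le hU hsucc)
      _ = succ lam := by rw [← hch, ← power_mul, mul_eq_self hlam]
  · calc #(patternReps A S) ≤ 3 ^ #S := mk_patternReps_le A S
      _ ≤ 3 ^ lam := power_le_power_left three_ne_zero hS.2
      _ = succ lam := by exact_mod_cast (nat_power_eq hlam (n := 3) (by norm_num)).trans hch

theorem mk_le_succ_of_pairwise_not_compat (hlam : ℵ₀ ≤ lam)
    (hch : (2 : Cardinal.{u}) ^ lam = succ lam) (hdom : ∀ p ∈ A, #(dom p) ≤ lam)
    (hanti : A.Pairwise fun p q => ¬ Compat p q) : #A ≤ succ lam := by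
  obtain ⟨P, hPcard, hPclosed⟩ := (isRegular_succ hlam).exists_closed
    (smallPatternReps_mono A lam) fun _ => mk_smallPatternReps_le hlam hch hdom
  refine (mk_le_mk_of_subset fun g hg => ?_).trans hPcard
  set S := dom g ∩ ⋃ p ∈ P ∩ A, dom p
  have hS : #S ≤ lam := (mk_le_mk_of_subset inter_subset_left).trans (hdom g hg)
  choose cover hcover using fun x : S => mem_iUnion₂.1 x.2.2
  have hcoverS : S ⊆ ⋃ p ∈ range cover ∩ A, dom p := fun x hx =>
    mem_biUnion ⟨⟨⟨x, hx⟩, rfl⟩, (hcover ⟨x, hx⟩).1.2⟩ (hcover ⟨x, hx⟩).2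
  have hcoverP : range cover ⊆ P := by
    rintro _ ⟨x, rfl⟩
    exact (hcover x).1.1
  obtain ⟨h, hh, hhg⟩ := exists_mem_patternReps A hg S
  have hhA : h ∈ A := patternReps_subset A S hh
  have hhP : h ∈ P := hPclosed _ hcoverP (mk_range_le.trans_lt (hS.trans_lt (lt_succ lam)))
    (mem_biUnion (show S ∈ _ from ⟨hcoverS, hS⟩) hh)
  have hcompat : Compat g h := compat_of_eqOn fun x hx =>
    (hhg ⟨hx.1, mem_biUnion ⟨hhP, hhA⟩ hx.2⟩).symm
  obtain rfl : g = h := by_contra fun hne => hanti hg hhA hne hcompat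
  exact hhP

end PartialBoolFun

open PartialBoolFun in
/-- Let `λ` be regular with `2 ^ λ = λ⁺` and let `ι` be an index type of size `λ`.
Any pairwise (coordinatewise) incompatible family of `λ`-sequences of partial
0-1 functions on `D`, each coordinate having domain of size `< λ`, has
cardinality at most `λ⁺` (the full-support `λ`-fold product is `λ⁺⁺`-c.c.). -/
theorem stmt2 {D : Type u} {ι : Type u} (lam : Cardinal.{u})
    (hreg : lam.IsRegular)
    (hch : (2 : Cardinal.{u}) ^ lam = Order.succ lam)
    (hι : #ι = lam)
    (A : Set (ι → D → Option Bool))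
    (hdom : ∀ f ∈ A, ∀ ξ : ι, #{x | f ξ x ≠ none} < lam)
    (hanti : ∀ f ∈ A, ∀ g ∈ A, f ≠ g → ∃ ξ : ι, ¬ Compat (f ξ) (g ξ)) :
    #↥A ≤ Order.succ lam := by
  rw [← mk_image_eq (s := A) Function.uncurry_injective]
  refine mk_le_succ_of_pairwise_not_compat hreg.aleph0_le hch ?_ ?_
  · rintro _ ⟨f, hf, rfl⟩
    exact mk_dom_uncurry_le hreg.aleph0_le hι.le fun ξ => (hdom f hf ξ).le
  · rintro _ ⟨f, hf, rfl⟩ _ ⟨g, hg, rfl⟩ hne hcompat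
    obtain ⟨ξ, hξ⟩ := hanti f hf g hg (ne_of_apply_ne _ hne)
    exact hξ fun x => hcompat (ξ, x)
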